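/- Let λ, μ > 0 and set ρ = λ/μ. Let X and S be independent random variables, X exponentially distributed with rate λ and S exponentially distributed with rate μ. Then E[(X+S)²]/(2(E[X]+E[S])) + E[S] = (1+2ρ+2ρ²)/(λ(1+ρ)). (This is the average age-upon-decisions of the M/M/1/1-M bufferless system.) -/

import Mathlib

/-!
The `n`-th moment of the exponential law with rate `r` is the Gamma integral
`r ∫₀^∞ xⁿ e^{-rx} dx = n! / rⁿ`. Expanding `(X + S)²`, independence factors the cross term,
`E[XS] = E[X] E[S]`, so the left-hand side is
`(2/λ² + 2/(λμ) + 2/μ²) / (2 (1/λ + 1/μ)) + 1/μ`, a rational function of `λ` and `μ`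
equal to the right-hand side.
-/

open MeasureTheory ProbabilityTheory Real

namespace ProbabilityTheory

open Set
open scoped Nat

variable {r : ℝ}

lemma expMeasure_eq_withDensity_Ioi (r : ℝ) :
    expMeasure r =
      (volume.restrict (Ioi 0)).withDensity fun x ↦ ENNReal.ofReal (r * exp (-(r * x))) := by
  have hpdf :
      exponentialPDF r = (Ici 0).indicator fun x ↦ ENNReal.ofReal (r * exp (-(r * x))) := by
    ext x
    by_cases hx : 0 ≤ x <;> simp [exponentialPDF_eq, hx]
  change volume.withDensity (exponentialPDF r) = _
  rw [hpdf, withDensity_indicator measurableSet_Ici,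
    Measure.restrict_congr_set Ioi_ae_eq_Ici]

lemma integrable_expMeasure_iff (hr : 0 < r) {f : ℝ → ℝ} :
    Integrable f (expMeasure r) ↔ IntegrableOn (fun x ↦ f x * exp (-(r * x))) (Ioi 0) := by
  rw [expMeasure_eq_withDensity_Ioi, integrable_withDensity_iff_integrable_smul' (by fun_prop)
    (ae_of_all _ fun _ ↦ ENNReal.ofReal_lt_top)]
  simp_rw [ENNReal.toReal_ofReal (by positivity : 0 ≤ r * exp _), smul_eq_mul, mul_right_comm r,
    mul_assoc]
  exact integrable_const_mul_iff (isUnit_iff_ne_zero.2 hr.ne') _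

lemma integral_expMeasure (hr : 0 ≤ r) (f : ℝ → ℝ) :
    ∫ x, f x ∂expMeasure r = r * ∫ x in Ioi 0, f x * exp (-(r * x)) := by
  rw [expMeasure_eq_withDensity_Ioi, integral_withDensity_eq_integral_toReal_smul (by fun_prop)
    (ae_of_all _ fun _ ↦ ENNReal.ofReal_lt_top)]
  simp_rw [ENNReal.toReal_ofReal (by positivity : 0 ≤ r * exp _), smul_eq_mul, mul_right_comm r,
    mul_assoc]
  exact integral_const_mul r _

lemma integrable_pow_expMeasure (hr : 0 < r) (n : ℕ) :
    Integrable (fun x ↦ x ^ n) (expMeasure r) := by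
  rw [integrable_expMeasure_iff hr]
  have hn : (-1 : ℝ) < n := neg_one_lt_zero.trans_le n.cast_nonneg
  refine (integrableOn_rpow_mul_exp_neg_mul_rpow (p := 1) hn zero_lt_one hr).congr_fun
    (fun x _ ↦ ?_) measurableSet_Ioi
  simp

lemma integral_pow_expMeasure (hr : 0 < r) (n : ℕ) :
    ∫ x, x ^ n ∂expMeasure r = n ! / r ^ n := by
  have hGamma := integral_rpow_mul_exp_neg_mul_Ioi (a := n + 1) (by positivity) hr
  simp_rw [add_sub_cancel_right, Gamma_nat_eq_factorial, ← Nat.cast_succ, rpow_natCast] at hGamma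
  rw [integral_expMeasure hr.le, hGamma, one_div_pow, pow_succ]
  field_simp

lemma memLp_two_id_expMeasure (hr : 0 < r) : MemLp id 2 (expMeasure r) :=
  (memLp_two_iff_integrable_sq aestronglyMeasurable_id).2 (integrable_pow_expMeasure hr 2)

variable {Ω : Type*} [MeasurableSpace Ω] {P : Measure Ω}

lemma HasLaw.integral_pow_of_expMeasure {X : Ω → ℝ} (hX : HasLaw X (expMeasure r) P)
    (hr : 0 < r) (n : ℕ) : ∫ ω, X ω ^ n ∂P = n ! / r ^ n :=
  (hX.integral_comp (f := fun x ↦ x ^ n) (by fun_prop)).trans (integral_pow_expMeasure hr n)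

lemma HasLaw.memLp_two_of_expMeasure {X : Ω → ℝ} (hX : HasLaw X (expMeasure r) P)
    (hr : 0 < r) : MemLp X 2 P := by
  have hid := memLp_two_id_expMeasure hr
  rw [← hX.map_eq] at hid
  exact (memLp_map_measure_iff aestronglyMeasurable_id hX.aemeasurable).1 hid

lemma IndepFun.integral_add_sq {X Y : Ω → ℝ} (hXY : X ⟂ᵢ[P] Y) (hX : MemLp X 2 P)
    (hY : MemLp Y 2 P) :
    ∫ ω, (X ω + Y ω) ^ 2 ∂P =
      ∫ ω, X ω ^ 2 ∂P + 2 * ((∫ ω, X ω ∂P) * ∫ ω, Y ω ∂P) + ∫ ω, Y ω ^ 2 ∂P := by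
  have hcross : Integrable (fun ω ↦ 2 * (X ω * Y ω)) P := (hX.integrable_mul hY).const_mul 2
  have hleft : Integrable (fun ω ↦ X ω ^ 2 + 2 * (X ω * Y ω)) P := hX.integrable_sq.add hcross
  simp_rw [add_sq, mul_assoc]
  rw [integral_add hleft hY.integrable_sq, integral_add hX.integrable_sq hcross,
    integral_const_mul, hXY.integral_fun_mul_eq_mul_integral hX.1 hY.1]

end ProbabilityTheory

theorem stmt_2_general {Ω : Type*} [MeasurableSpace Ω] (P : Measure Ω)
    (lam mu rho : ℝ) (hlam : 0 < lam) (hmu : 0 < mu) (hrho : rho = lam / mu)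
    (X S : Ω → ℝ) (hX : Measurable X) (hS : Measurable S)
    (hindep : IndepFun X S P)
    (hXdist : Measure.map X P = expMeasure lam)
    (hSdist : Measure.map S P = expMeasure mu) :
    (∫ ω, (X ω + S ω) ^ 2 ∂P) / (2 * ((∫ ω, X ω ∂P) + ∫ ω, S ω ∂P)) + (∫ ω, S ω ∂P)
      = (1 + 2 * rho + 2 * rho ^ 2) / (lam * (1 + rho)) := by
  have hXlaw : HasLaw X (expMeasure lam) P := ⟨hX.aemeasurable, hXdist⟩
  have hSlaw : HasLaw S (expMeasure mu) P := ⟨hS.aemeasurable, hSdist⟩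
  have hXmean : ∫ ω, X ω ∂P = lam⁻¹ := by simpa using hXlaw.integral_pow_of_expMeasure hlam 1
  have hSmean : ∫ ω, S ω ∂P = mu⁻¹ := by simpa using hSlaw.integral_pow_of_expMeasure hmu 1
  rw [hindep.integral_add_sq (hXlaw.memLp_two_of_expMeasure hlam)
      (hSlaw.memLp_two_of_expMeasure hmu), hXlaw.integral_pow_of_expMeasure hlam,
    hSlaw.integral_pow_of_expMeasure hmu, hXmean, hSmean, hrho]
  field_simp
  ring

/-- The average age-upon-decisions of the M/M/1/1-M bufferless system:
`X` exponential with rate `lam`, `S` exponential with rate `mu`, independent; with `ρ = lam/mu`,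
`E[(X+S)²]/(2(E[X]+E[S])) + E[S] = (1+2ρ+2ρ²)/(lam·(1+ρ))`. -/
theorem stmt_2 {Ω : Type*} [MeasurableSpace Ω] (P : Measure Ω) [IsProbabilityMeasure P]
    (lam mu rho : ℝ) (hlam : 0 < lam) (hmu : 0 < mu) (hrho : rho = lam / mu)
    (X S : Ω → ℝ) (hX : Measurable X) (hS : Measurable S)
    (hindep : IndepFun X S P)
    (hXdist : Measure.map X P = expMeasure lam)
    (hSdist : Measure.map S P = expMeasure mu) :
    (∫ ω, (X ω + S ω) ^ 2 ∂P) / (2 * ((∫ ω, X ω ∂P) + ∫ ω, S ω ∂P)) + (∫ ω, S ω ∂P)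
      = (1 + 2 * rho + 2 * rho ^ 2) / (lam * (1 + rho)) :=
  stmt_2_general P lam mu rho hlam hmu hrho X S hX hS hindep hXdist hSdist
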